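/- Every cycle Cₙ (n ≥ 3) admits a distance edge-labeling with labels from {0,1,2,3,4}; that is, λ'(Cₙ) ≤ 4 for all n ≥ 3. -/

import Mathlib

open SimpleGraph

/-- Two edges (as unordered pairs) are adjacent: distinct and share an endpoint. -/
def edgeAdj {V : Type*} (e e' : Sym2 V) : Prop := e ≠ e' ∧ ∃ v, v ∈ e ∧ v ∈ e'

/-- Two edges are at distance two: not adjacent, distinct, and some edge of `G` is
adjacent to both. -/
def edgeDist2 {V : Type*} (G : SimpleGraph V) (e e' : Sym2 V) : Prop :=
  ¬ edgeAdj e e' ∧ e ≠ e' ∧ ∃ g ∈ G.edgeSet, edgeAdj e g ∧ edgeAdj g e'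

/-- A distance edge-labeling: adjacent edges get labels differing by ≥ 2,
edges at distance two get labels differing by ≥ 1. -/
def IsDistEdgeLabeling {V : Type*} (G : SimpleGraph V) (f : Sym2 V → ℕ) : Prop :=
  (∀ e ∈ G.edgeSet, ∀ e' ∈ G.edgeSet, edgeAdj e e' → 2 ≤ |(f e : ℤ) - (f e' : ℤ)|) ∧
  (∀ e ∈ G.edgeSet, ∀ e' ∈ G.edgeSet, edgeDist2 G e e' → 1 ≤ |(f e : ℤ) - (f e' : ℤ)|)

/-- `lambdaE G = λ'(G)`: the minimum over distance edge-labelings of the maximum label. -/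
noncomputable def lambdaE {V : Type*} (G : SimpleGraph V) : ℕ :=
  sInf {l | ∃ f : Sym2 V → ℕ, IsDistEdgeLabeling G f ∧ ∀ e ∈ G.edgeSet, f e ≤ l}

/-! ### Auxiliary development -/

/-- The label pattern along the cycle `Cₙ`, as a function of the edge index. -/
def gl (n i : ℕ) : ℕ :=
  if n % 3 = 0 then 2 * (i % 3)
  else if n % 3 = 1 then
    (if i < n - 4 then 2 * (i % 3)
     else if i = n - 4 then 0 else if i = n - 3 then 3 else if i = n - 2 then 1 else 4)
  else
    (if i < n - 2 then 2 * (i % 3) else if i = n - 2 then 1 else 3)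

lemma gl_le (n i : ℕ) : gl n i ≤ 4 := by unfold gl; split_ifs <;> omega

lemma key1 (n i : ℕ) (hn : 3 ≤ n) (hi : i < n) :
    gl n ((i+1) % n) + 2 ≤ gl n i ∨ gl n i + 2 ≤ gl n ((i+1) % n) := by
  rcases Nat.lt_or_ge (i+1) n with h | h
  · rw [Nat.mod_eq_of_lt h]; unfold gl; split_ifs <;> omega
  · have he : i + 1 = n := by omega
    have h0 : (i+1) % n = 0 := by rw [he, Nat.mod_self]
    rw [h0]; unfold gl; split_ifs <;> omega

lemma key2 (n i : ℕ) (hn : 3 ≤ n) (hi : i < n) :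
    gl n ((i+2) % n) + 1 ≤ gl n i ∨ gl n i + 1 ≤ gl n ((i+2) % n) := by
  rcases Nat.lt_or_ge (i+2) n with h | h
  · rw [Nat.mod_eq_of_lt h]; unfold gl; split_ifs <;> omega
  · rcases Nat.lt_or_ge i (n-1) with h2 | h2
    · have he : i + 2 = n := by omega
      have h0 : (i+2) % n = 0 := by rw [he, Nat.mod_self]
      rw [h0]; unfold gl; split_ifs <;> omega
    · have he : i + 2 = n + 1 := by omega
      have h0 : (i+2) % n = 1 := by
        rw [he, Nat.add_mod_left n 1]; exact Nat.mod_eq_of_lt (by omega)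
      rw [h0]; unfold gl; split_ifs <;> omega

lemma abs2 (a b : ℕ) (h : a + 2 ≤ b ∨ b + 2 ≤ a) : 2 ≤ |(a:ℤ) - (b:ℤ)| := by
  rcases h with h | h
  · have hb : (a:ℤ) + 2 ≤ b := by exact_mod_cast h
    rw [abs_sub_comm, abs_of_nonneg (by omega)]; omega
  · have hb : (b:ℤ) + 2 ≤ a := by exact_mod_cast h
    rw [abs_of_nonneg (by omega)]; omega

lemma abs1 (a b : ℕ) (h : a + 1 ≤ b ∨ b + 1 ≤ a) : 1 ≤ |(a:ℤ) - (b:ℤ)| := by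
  rcases h with h | h
  · have hb : (a:ℤ) + 1 ≤ b := by exact_mod_cast h
    rw [abs_sub_comm, abs_of_nonneg (by omega)]; omega
  · have hb : (b:ℤ) + 1 ≤ a := by exact_mod_cast h
    rw [abs_of_nonneg (by omega)]; omega

lemma mod_cases' (a n : ℕ) (ha : a < 2*n) : a % n = a ∨ (n ≤ a ∧ a % n = a - n) := by
  rcases lt_or_ge a n with h | h
  · left; exact Nat.mod_eq_of_lt h
  · right; exact ⟨h, by rw [Nat.mod_eq_sub_mod h, Nat.mod_eq_of_lt (by omega)]⟩

variable {m : ℕ}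

lemma val_one' : (1 : Fin (m+3)).val = 1 := by rw [Fin.val_one]

lemma val_add_one (i : Fin (m+3)) : (i + 1).val = (i.val + 1) % (m+3) := by
  rw [Fin.add_def, val_one']

lemma val_add_two (i : Fin (m+3)) : (i + 2).val = (i.val + 2) % (m+3) := by
  rw [Fin.add_def]
  have h2 : ((2 : Fin (m+3)) : ℕ) = 2 := by
    show 2 % (m+3) = 2
    exact Nat.mod_eq_of_lt (by omega)
  rw [h2]

lemma edge_eq {i j : Fin (m+3)} (h : s(i, i+1) = s(j, j+1)) : i = j := by
  rw [Sym2.eq_iff] at h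
  rcases h with ⟨h1, _⟩ | ⟨h1, h2⟩
  · exact h1
  · exfalso
    have hv1 : i.val = (j.val + 1) % (m+3) := by rw [h1]; exact val_add_one j
    have hv2 : (i.val + 1) % (m+3) = j.val := by rw [← h2]; exact val_add_one i
    have hi := i.isLt; have hj := j.isLt
    have c1 := mod_cases' (j.val+1) (m+3) (by omega)
    have c2 := mod_cases' (i.val+1) (m+3) (by omega)
    omega

lemma adj_iff {u v : Fin (m+3)} :
    (cycleGraph (m+3)).Adj u v ↔ v = u + 1 ∨ u = v + 1 := by
  rw [cycleGraph_adj']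
  constructor
  · rintro (h | h)
    · right
      have h1 : u - v = 1 := Fin.ext (by rw [val_one']; exact h)
      have h2 := sub_eq_iff_eq_add.mp h1
      rw [h2]; exact add_comm 1 v
    · left
      have h1 : v - u = 1 := Fin.ext (by rw [val_one']; exact h)
      have h2 := sub_eq_iff_eq_add.mp h1
      rw [h2]; exact add_comm 1 u
  · rintro (h | h)
    · right; rw [h, show u + 1 - u = 1 by open Fin.CommRing in ring, val_one']
    · left; rw [h, show v + 1 - v = 1 by open Fin.CommRing in ring, val_one']

lemma mem_edge {e : Sym2 (Fin (m+3))} :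
    e ∈ (cycleGraph (m+3)).edgeSet ↔ ∃ i : Fin (m+3), e = s(i, i+1) := by
  induction e with
  | _ u v =>
    rw [mem_edgeSet, adj_iff]
    constructor
    · rintro (h | h)
      · exact ⟨u, by rw [h]⟩
      · exact ⟨v, by rw [h, Sym2.eq_swap]⟩
    · rintro ⟨i, hi⟩
      rw [Sym2.eq_iff] at hi
      rcases hi with ⟨rfl, rfl⟩ | ⟨rfl, rfl⟩
      · left; rfl
      · right; rfl

lemma adjE {i j : Fin (m+3)} (h : edgeAdj s(i, i+1) s(j, j+1)) : j = i + 1 ∨ i = j + 1 := by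
  obtain ⟨hne, v, hv1, hv2⟩ := h
  rw [Sym2.mem_iff] at hv1 hv2
  rcases hv1 with rfl | rfl
  · rcases hv2 with h | h
    · exact absurd (by rw [h]) hne
    · right; exact h
  · rcases hv2 with h | h
    · left; exact h.symm
    · exact absurd (by rw [add_right_cancel h]) hne

/-- The labeling as a function on unordered pairs. -/
noncomputable def fl (m : ℕ) : Sym2 (Fin (m+3)) → ℕ := fun e =>
  if h : ∃ i : Fin (m+3), e = s(i, i+1) then gl (m+3) h.choose.val else 0

lemma fl_spec (i : Fin (m+3)) : fl m (s(i, i+1)) = gl (m+3) i.val := by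
  unfold fl
  rw [dif_pos (⟨i, rfl⟩ : ∃ j : Fin (m+3), s(i, i+1) = s(j, j+1))]
  have hs := (⟨i, rfl⟩ : ∃ j : Fin (m+3), s(i, i+1) = s(j, j+1)).choose_spec
  rw [← edge_eq hs]

theorem stmt12 (n : ℕ) (hn : 3 ≤ n) : lambdaE (SimpleGraph.cycleGraph n) ≤ 4 := by
  obtain ⟨m, rfl⟩ : ∃ m, n = m + 3 := ⟨n - 3, by omega⟩
  apply Nat.sInf_le
  refine ⟨fl m, ⟨?_, ?_⟩, ?_⟩
  · intro e he e' he' hadj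
    rw [mem_edge] at he he'
    obtain ⟨i, rfl⟩ := he
    obtain ⟨j, rfl⟩ := he'
    rw [fl_spec, fl_spec]
    rcases adjE hadj with rfl | rfl
    · rw [val_add_one]
      exact abs2 _ _ (key1 (m+3) i.val (by omega) i.isLt).symm
    · rw [val_add_one]
      exact abs2 _ _ (key1 (m+3) j.val (by omega) j.isLt)
  · intro e he e' he' hd
    rw [mem_edge] at he he'
    obtain ⟨i, rfl⟩ := he
    obtain ⟨j, rfl⟩ := he'
    obtain ⟨hna, hne, g', hg', h1, h2⟩ := hd
    rw [mem_edge] at hg'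
    obtain ⟨k, rfl⟩ := hg'
    rw [fl_spec, fl_spec]
    rcases adjE h1 with rfl | hik
    · rcases adjE h2 with rfl | hjk
      · rw [show i + 1 + 1 = i + 2 by open Fin.CommRing in ring, val_add_two]
        exact abs1 _ _ (key2 (m+3) i.val (by omega) i.isLt).symm
      · exact absurd (by rw [add_right_cancel hjk]) hne
    · rcases adjE h2 with rfl | hjk
      · exact absurd (by rw [hik]) hne
      · rw [hik, hjk, show j + 1 + 1 = j + 2 by open Fin.CommRing in ring, val_add_two]
        exact abs1 _ _ (key2 (m+3) j.val (by omega) j.isLt)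
  · intro e he
    rw [mem_edge] at he
    obtain ⟨i, rfl⟩ := he
    rw [fl_spec]
    exact gl_le _ _
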